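/- Let b > 0 and m > 0 be real. If ψ₁ and ψ₂ are functions (0,∞) → ℂ that are twice continuously differentiable on (0,∞), square integrable with respect to Lebesgue measure on (0,∞), and both satisfy −(1/(2m))[ψ''(r) + (1/4)·ψ(r)/r² − (b²r²/4)·ψ(r)] = i·ψ(r) for all r ∈ (0,∞), then ψ₁ and ψ₂ are linearly dependent over ℂ: there exist complex numbers c₁, c₂, not both zero, with c₁ψ₁ + c₂ψ₂ = 0 on (0,∞). -/

import Mathlib

/-!
With `Q r = b²r²/4 - 1/(4r²) - 2im` the equation reads `ψ'' = Q ψ`, so the Wronskian of two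
solutions is constant. For a solution in `L²`, the energy identity
`(Re ψ̄ψ')' = |ψ'|² + Re Q |ψ|²` with `Re Q ≥ -1/4` on `[1, ∞)` shows that `ψ'` is in `L²` on
`[1, ∞)` too: otherwise `Re ψ̄ψ' = (|ψ|²)'/2` would eventually stay above `1`, and `|ψ|²` would
grow linearly. The Wronskian is then an integrable constant on `[1, ∞)`, hence zero, and
uniqueness for the initial value problem makes the two solutions proportional.
-/

open MeasureTheory Set Filter

structure IsSchrodingerSolution (Q ψ : ℝ → ℂ) : Prop where
  contDiffOn : ContDiffOn ℝ 2 ψ (Ioi 0)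
  deriv_deriv : ∀ r ∈ Ioi (0 : ℝ), deriv (deriv ψ) r = Q r * ψ r

noncomputable def wronskian (ψ₁ ψ₂ : ℝ → ℂ) (r : ℝ) : ℂ := ψ₁ r * deriv ψ₂ r - ψ₂ r * deriv ψ₁ r

theorem Complex.inner_mul_right_self (q z : ℂ) : inner ℝ z (q * z) = q.re * ‖z‖ ^ 2 := by
  rw [Complex.inner, mul_assoc, Complex.mul_conj, Complex.normSq_eq_norm_sq]
  exact Complex.re_mul_ofReal _ _

theorem eq_zero_of_norm_le_of_integrableOn_Ioi {E : Type*} [NormedAddCommGroup E] {c : E}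
    {g : ℝ → ℝ} {a : ℝ} (hg : IntegrableOn g (Ioi a)) (hc : ∀ t ∈ Ioi a, ‖c‖ ≤ g t) : c = 0 := by
  have hconst : IntegrableOn (fun _ => c) (Ioi a) :=
    hg.mono' aestronglyMeasurable_const ((ae_restrict_iff' measurableSet_Ioi).mpr (.of_forall hc))
  simpa [integrableOn_const_iff, Real.volume_Ioi] using hconst

theorem frequently_inner_lt_one_of_integrableOn_norm_sq {E : Type*} [NormedAddCommGroup E]
    [InnerProductSpace ℝ E] {ψ ψ' : ℝ → E} {a : ℝ}
    (hψ : ∀ t ∈ Ioi a, HasDerivAt ψ (ψ' t) t) (hint : IntegrableOn (fun t => ‖ψ t‖ ^ 2) (Ioi a)) :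
    ∃ᶠ t in atTop, inner ℝ (ψ t) (ψ' t) < 1 := by
  by_contra hlt
  simp only [not_frequently, not_lt] at hlt
  obtain ⟨R, hR⟩ := eventually_atTop.mp (hlt.and (eventually_gt_atTop a))
  -- `(‖ψ‖²)' = 2 ⟪ψ, ψ'⟫ ≥ 2` beyond `R`, so `‖ψ‖² ≥ 2` beyond `R + 1`
  have hgrowth : ∀ t ∈ Ioi (R + 1), ‖(2 : ℝ)‖ ≤ ‖ψ t‖ ^ 2 := by
    intro t ht
    have hRt : R ≤ t := by linarith [mem_Ioi.mp ht]
    have hderiv : ∀ x ∈ Icc R t, HasDerivAt (fun t => ‖ψ t‖ ^ 2) (2 * inner ℝ (ψ x) (ψ' x)) x :=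
      fun x hx => (hψ x (hR x hx.1).2).norm_sq
    have hle := intervalIntegral.integral_le_sub_of_hasDeriv_right_of_le hRt
      (fun x hx => (hderiv x hx).continuousAt.continuousWithinAt)
      (fun x hx => (hderiv x (Ioo_subset_Icc_self hx)).hasDerivWithinAt)
      (integrableOn_const (C := (2 : ℝ)) measure_Icc_lt_top.ne)
      (fun x hx => by linarith [(hR x hx.1.le).1])
    rw [intervalIntegral.integral_const, smul_eq_mul] at hle
    rw [Real.norm_two]
    nlinarith [mem_Ioi.mp ht, sq_nonneg ‖ψ R‖]
  exact two_ne_zero (eq_zero_of_norm_le_of_integrableOn_Ioi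
    (hint.mono_set (Ioi_subset_Ioi (by linarith [(hR R le_rfl).2]))) hgrowth)

theorem norm_wronskian_le (ψ₁ ψ₂ : ℝ → ℂ) (t : ℝ) :
    ‖wronskian ψ₁ ψ₂ t‖
      ≤ (‖ψ₁ t‖ ^ 2 + ‖deriv ψ₂ t‖ ^ 2 + ‖ψ₂ t‖ ^ 2 + ‖deriv ψ₁ t‖ ^ 2) / 2 := by
  have hsub := norm_sub_le (ψ₁ t * deriv ψ₂ t) (ψ₂ t * deriv ψ₁ t)
  rw [norm_mul, norm_mul] at hsub
  unfold wronskian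
  nlinarith [sq_nonneg (‖ψ₁ t‖ - ‖deriv ψ₂ t‖), sq_nonneg (‖ψ₂ t‖ - ‖deriv ψ₁ t‖)]

theorem eq_zero_of_hasDerivAt_of_eq_zero {Q φ φ' : ℝ → ℂ} (hQ : ContinuousOn Q (Ioi 0))
    (hφ : ∀ t ∈ Ioi (0 : ℝ), HasDerivAt φ (φ' t) t)
    (hφ' : ∀ t ∈ Ioi (0 : ℝ), HasDerivAt φ' (Q t * φ t) t)
    {r₀ : ℝ} (hr₀ : 0 < r₀) (h₀ : φ r₀ = 0) (h₀' : φ' r₀ = 0) {r : ℝ} (hr : 0 < r) : φ r = 0 := by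
  obtain ⟨a, T, ha, hr_mem, hr₀_mem⟩ : ∃ a T : ℝ, 0 < a ∧ r ∈ Ioo a T ∧ r₀ ∈ Ioo a T :=
    ⟨min r r₀ / 2, max r r₀ + 1, by positivity,
      ⟨by linarith [min_le_left r r₀, lt_min hr hr₀], by linarith [le_max_left r r₀]⟩,
      ⟨by linarith [min_le_right r r₀, lt_min hr hr₀], by linarith [le_max_right r r₀]⟩⟩
  have hsub : Ioo a T ⊆ Ioi 0 := fun t ht => ha.trans ht.1
  obtain ⟨K, hK⟩ := isCompact_Icc.exists_bound_of_continuousOn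
    (hQ.mono fun t (ht : t ∈ Icc a T) => ha.trans_le ht.1)
  -- the first-order system `(φ, φ')' = (φ', Q φ)` is Lipschitz on `(a, T)` by compactness
  have hlip : ∀ t ∈ Ioo a T, LipschitzOnWith (max 1 K.toNNReal)
      (fun p : ℂ × ℂ => (p.2, Q t * p.1)) univ := by
    intro t ht
    refine (LipschitzWith.prod_snd.prodMk
      ((lipschitzWith_smul (Q t)).comp LipschitzWith.prod_fst)).weaken ?_ |>.lipschitzOnWith
    refine max_le_max le_rfl ?_
    rw [mul_one, ← NNReal.coe_le_coe, coe_nnnorm]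
    exact (hK t ⟨ht.1.le, ht.2.le⟩).trans (le_max_left _ _) |>.trans_eq
      (Real.coe_toNNReal' K).symm
  have hsol := ODE_solution_unique_of_mem_Ioo (g := fun _ => (0, 0)) hlip hr₀_mem
    (fun t ht => ⟨(hφ t (hsub ht)).prodMk (hφ' t (hsub ht)), mem_univ _⟩)
    (fun t _ => ⟨(hasDerivAt_const t ((0 : ℂ), (0 : ℂ))).congr_deriv (by simp [Prod.zero_eq_mk]),
      mem_univ _⟩)
    (by simp [h₀, h₀'])
  exact congrArg Prod.fst (hsol hr_mem)

namespace IsSchrodingerSolution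

variable {Q ψ ψ₁ ψ₂ : ℝ → ℂ} {r : ℝ}

theorem hasDerivAt (h : IsSchrodingerSolution Q ψ) (hr : 0 < r) : HasDerivAt ψ (deriv ψ r) r :=
  ((h.contDiffOn.differentiableOn two_ne_zero).differentiableAt
    (isOpen_Ioi.mem_nhds hr)).hasDerivAt

theorem hasDerivAt_deriv (h : IsSchrodingerSolution Q ψ) (hr : 0 < r) :
    HasDerivAt (deriv ψ) (Q r * ψ r) r := by
  rw [← h.deriv_deriv r hr]
  exact (((h.contDiffOn.deriv_of_isOpen isOpen_Ioi (by norm_num)).differentiableOn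
    one_ne_zero).differentiableAt (isOpen_Ioi.mem_nhds hr)).hasDerivAt

theorem continuousOn_deriv (h : IsSchrodingerSolution Q ψ) : ContinuousOn (deriv ψ) (Ioi 0) :=
  h.contDiffOn.continuousOn_deriv_of_isOpen isOpen_Ioi (by norm_num)

theorem hasDerivAt_wronskian (h₁ : IsSchrodingerSolution Q ψ₁) (h₂ : IsSchrodingerSolution Q ψ₂)
    (hr : 0 < r) : HasDerivAt (wronskian ψ₁ ψ₂) 0 r := by
  refine (((h₁.hasDerivAt hr).mul (h₂.hasDerivAt_deriv hr)).sub
    ((h₂.hasDerivAt hr).mul (h₁.hasDerivAt_deriv hr))).congr_deriv ?_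
  ring

theorem wronskian_eq (h₁ : IsSchrodingerSolution Q ψ₁) (h₂ : IsSchrodingerSolution Q ψ₂)
    {x y : ℝ} (hx : 0 < x) (hy : 0 < y) : wronskian ψ₁ ψ₂ x = wronskian ψ₁ ψ₂ y :=
  isOpen_Ioi.is_const_of_deriv_eq_zero isPreconnected_Ioi
    (fun _ ht => (h₁.hasDerivAt_wronskian h₂ ht).differentiableAt.differentiableWithinAt)
    (fun _ ht => (h₁.hasDerivAt_wronskian h₂ ht).deriv) hx hy

theorem wronskian_eq_zero (h₁ : IsSchrodingerSolution Q ψ₁) (h₂ : IsSchrodingerSolution Q ψ₂)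
    (hψ₁ : IntegrableOn (fun t => ‖ψ₁ t‖ ^ 2) (Ioi 1))
    (hψ₂ : IntegrableOn (fun t => ‖ψ₂ t‖ ^ 2) (Ioi 1))
    (hψ₁' : IntegrableOn (fun t => ‖deriv ψ₁ t‖ ^ 2) (Ioi 1))
    (hψ₂' : IntegrableOn (fun t => ‖deriv ψ₂ t‖ ^ 2) (Ioi 1)) (hr : 0 < r) :
    wronskian ψ₁ ψ₂ r = 0 := by
  rw [h₁.wronskian_eq h₂ hr one_pos]
  refine eq_zero_of_norm_le_of_integrableOn_Ioi ((((hψ₁.add hψ₂').add hψ₂).add hψ₁').div_const 2)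
    fun t ht => ?_
  rw [h₁.wronskian_eq h₂ one_pos (one_pos.trans ht)]
  exact norm_wronskian_le ψ₁ ψ₂ t

theorem hasDerivAt_inner_deriv (h : IsSchrodingerSolution Q ψ) (hr : 0 < r) :
    HasDerivAt (fun t => inner ℝ (ψ t) (deriv ψ t))
      ((Q r).re * ‖ψ r‖ ^ 2 + ‖deriv ψ r‖ ^ 2) r := by
  refine ((h.hasDerivAt hr).inner ℝ (h.hasDerivAt_deriv hr)).congr_deriv ?_
  rw [Complex.inner_mul_right_self, real_inner_self_eq_norm_sq]

theorem integral_norm_sq_deriv_sub_le {κ a R : ℝ} (h : IsSchrodingerSolution Q ψ)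
    (hQ : ∀ t ∈ Ioo a R, -κ ≤ (Q t).re) (ha : 0 < a) (haR : a ≤ R) :
    ∫ t in a..R, (‖deriv ψ t‖ ^ 2 - κ * ‖ψ t‖ ^ 2)
      ≤ inner ℝ (ψ R) (deriv ψ R) - inner ℝ (ψ a) (deriv ψ a) := by
  have hIcc : Icc a R ⊆ Ioi 0 := fun t ht => ha.trans_le ht.1
  refine intervalIntegral.integral_le_sub_of_hasDeriv_right_of_le haR
    (fun t ht => (h.hasDerivAt_inner_deriv (hIcc ht)).continuousAt.continuousWithinAt)
    (fun t ht => (h.hasDerivAt_inner_deriv (hIcc (Ioo_subset_Icc_self ht))).hasDerivWithinAt)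
    (ContinuousOn.integrableOn_Icc ?_) fun t ht => ?_
  · have hψ : ContinuousOn ψ (Icc a R) := h.contDiffOn.continuousOn.mono hIcc
    exact ((h.continuousOn_deriv.mono hIcc).norm.pow 2).sub (continuousOn_const.mul (hψ.norm.pow 2))
  · nlinarith [hQ t ht, sq_nonneg ‖ψ t‖]

theorem integrableOn_norm_sq_deriv {κ : ℝ} (h : IsSchrodingerSolution Q ψ) (hκ : 0 ≤ κ)
    (hQ : ∀ t ∈ Ioi 1, -κ ≤ (Q t).re) (hψ : IntegrableOn (fun t => ‖ψ t‖ ^ 2) (Ioi 1)) :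
    IntegrableOn (fun t => ‖deriv ψ t‖ ^ 2) (Ioi 1) := by
  set F := fun t => inner ℝ (ψ t) (deriv ψ t)
  set A := ∫ t in Ioi 1, ‖ψ t‖ ^ 2
  have hcontOn : ContinuousOn (fun t => ‖deriv ψ t‖ ^ 2) (Ici 1) :=
    (h.continuousOn_deriv.mono fun _ (ht : _ ∈ Ici 1) => one_pos.trans_le ht).norm.pow 2
  have hcont : ∀ R, 1 ≤ R → IntervalIntegrable (fun t => ‖deriv ψ t‖ ^ 2) volume 1 R :=
    fun R hR => (hcontOn.mono Icc_subset_Ici_self).intervalIntegrable_of_Icc hR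
  have hbound : ∀ R, 1 ≤ R → ∫ t in (1 : ℝ)..R, ‖deriv ψ t‖ ^ 2 ≤ F R - F 1 + κ * A := by
    intro R hR
    have hψR : IntervalIntegrable (fun t => ‖ψ t‖ ^ 2) volume 1 R :=
      (h.contDiffOn.continuousOn.mono fun t ht => one_pos.trans_le ht.1).norm.pow 2
        |>.intervalIntegrable_of_Icc hR
    have hA : ∫ t in (1 : ℝ)..R, ‖ψ t‖ ^ 2 ≤ A := by
      rw [intervalIntegral.integral_of_le hR]
      exact setIntegral_mono_set hψ (.of_forall fun t => by positivity)
        (Ioc_subset_Ioi_self.eventuallyLE)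
    have henergy := h.integral_norm_sq_deriv_sub_le (κ := κ)
      (fun t ht => hQ t ht.1) one_pos hR
    rw [intervalIntegral.integral_sub (hcont R hR) (hψR.const_mul κ),
      intervalIntegral.integral_const_mul] at henergy
    nlinarith
  -- `∫₁^R ‖ψ'‖²` is monotone in `R` and bounded along the `R` where `F R < 1`
  refine integrableOn_Ioi_of_intervalIntegral_norm_bounded (1 - F 1 + κ * A) 1
    (l := atTop) (b := id) (fun R => ?_) tendsto_id ?_
  · exact (hcontOn.mono Icc_subset_Ici_self).integrableOn_Icc.mono_set Ioc_subset_Icc_self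
  · filter_upwards [eventually_ge_atTop 1] with R₀ hR₀
    obtain ⟨R, hR₀R, hFR⟩ :=
      (frequently_inner_lt_one_of_integrableOn_norm_sq
        (fun t ht => h.hasDerivAt (one_pos.trans ht)) hψ).forall_exists_of_atTop R₀
    simp only [norm_pow, norm_norm, id]
    calc ∫ t in (1 : ℝ)..R₀, ‖deriv ψ t‖ ^ 2 ≤ ∫ t in (1 : ℝ)..R, ‖deriv ψ t‖ ^ 2 :=
          intervalIntegral.integral_mono_interval le_rfl hR₀ hR₀R
            (.of_forall fun t => by positivity) (hcont R (hR₀.trans hR₀R))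
      _ ≤ F R - F 1 + κ * A := hbound R (hR₀.trans hR₀R)
      _ ≤ 1 - F 1 + κ * A := by linarith

theorem eq_div_mul_of_wronskian_eq_zero
    (h₁ : IsSchrodingerSolution Q ψ₁) (h₂ : IsSchrodingerSolution Q ψ₂)
    (hQ : ContinuousOn Q (Ioi 0)) (hW : ∀ r ∈ Ioi (0 : ℝ), wronskian ψ₁ ψ₂ r = 0)
    {r₀ : ℝ} (hr₀ : 0 < r₀) (hψ₁ : ψ₁ r₀ ≠ 0) (hr : 0 < r) :
    ψ₂ r = ψ₂ r₀ / ψ₁ r₀ * ψ₁ r := by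
  set k := ψ₂ r₀ / ψ₁ r₀
  refine sub_eq_zero.mp (eq_zero_of_hasDerivAt_of_eq_zero (φ := fun t => ψ₂ t - k * ψ₁ t)
    (φ' := fun t => deriv ψ₂ t - k * deriv ψ₁ t) hQ
    (fun t ht => (h₂.hasDerivAt ht).sub ((h₁.hasDerivAt ht).const_mul k))
    (fun t ht => ((h₂.hasDerivAt_deriv ht).sub ((h₁.hasDerivAt_deriv ht).const_mul k)).congr_deriv
      (by ring))
    hr₀ ?_ ?_ hr)
  · simp [k, div_mul_cancel₀ _ hψ₁]
  · have hW₀ := hW r₀ hr₀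
    simp only [wronskian] at hW₀
    simp only [k]
    field_simp
    linear_combination hW₀

end IsSchrodingerSolution

noncomputable def landauPotential (b m r : ℝ) : ℂ :=
  ((b ^ 2 * r ^ 2 / 4 - 1 / (4 * r ^ 2) : ℝ) : ℂ) - 2 * m * Complex.I

theorem landauPotential_re (b m r : ℝ) :
    (landauPotential b m r).re = b ^ 2 * r ^ 2 / 4 - 1 / (4 * r ^ 2) := by
  rw [landauPotential, Complex.sub_re, Complex.ofReal_re]
  simp

theorem continuousOn_landauPotential (b m : ℝ) : ContinuousOn (landauPotential b m) (Ioi 0) := by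
  refine (Complex.continuous_ofReal.comp_continuousOn ?_).sub continuousOn_const
  exact (continuousOn_const.mul (continuousOn_pow 2)).div_const 4 |>.sub
    (continuousOn_const.div (by fun_prop) fun r hr => by have : 0 < r := hr; positivity)

theorem neg_quarter_le_landauPotential_re (b m : ℝ) {r : ℝ} (hr : 1 ≤ r) :
    -(1 / 4) ≤ (landauPotential b m r).re := by
  rw [landauPotential_re]
  have : 1 / (4 * r ^ 2) ≤ 1 / 4 := by gcongr; nlinarith
  nlinarith [sq_nonneg (b * r)]

theorem isSchrodingerSolution_landauPotential {b m : ℝ} {ψ : ℝ → ℂ} (hm : m ≠ 0)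
    (hψ : ContDiffOn ℝ 2 ψ (Ioi 0))
    (hode : ∀ r ∈ Ioi (0 : ℝ),
      -(1 / (2 * (m : ℂ))) * (deriv (deriv ψ) r
          + (1 : ℂ) / 4 * ψ r / (r : ℂ) ^ 2
          - (b : ℂ) ^ 2 * (r : ℂ) ^ 2 / 4 * ψ r)
        = Complex.I * ψ r) :
    IsSchrodingerSolution (landauPotential b m) ψ := by
  refine ⟨hψ, fun r hr => ?_⟩
  have hr0 : (r : ℂ) ≠ 0 := Complex.ofReal_ne_zero.mpr (ne_of_gt hr)
  have hm0 : (m : ℂ) ≠ 0 := Complex.ofReal_ne_zero.mpr hm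
  have h := hode r hr
  simp only [landauPotential]
  push_cast
  field_simp at h ⊢
  linear_combination -h

theorem deficiency_plus_solutions_l_zero_linearly_dependent_general
    (b m : ℝ) (hm : 0 < m)
    (ψ₁ ψ₂ : ℝ → ℂ)
    (hsmooth₁ : ContDiffOn ℝ 2 ψ₁ (Set.Ioi 0))
    (hsmooth₂ : ContDiffOn ℝ 2 ψ₂ (Set.Ioi 0))
    (hL2₁ : MemLp ψ₁ 2 (volume.restrict (Set.Ioi 0)))
    (hL2₂ : MemLp ψ₂ 2 (volume.restrict (Set.Ioi 0)))
    (hode₁ : ∀ r ∈ Set.Ioi (0 : ℝ),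
      -(1 / (2 * (m : ℂ))) * (deriv (deriv ψ₁) r
          + (1 : ℂ) / 4 * ψ₁ r / (r : ℂ) ^ 2
          - (b : ℂ) ^ 2 * (r : ℂ) ^ 2 / 4 * ψ₁ r)
        = Complex.I * ψ₁ r)
    (hode₂ : ∀ r ∈ Set.Ioi (0 : ℝ),
      -(1 / (2 * (m : ℂ))) * (deriv (deriv ψ₂) r
          + (1 : ℂ) / 4 * ψ₂ r / (r : ℂ) ^ 2
          - (b : ℂ) ^ 2 * (r : ℂ) ^ 2 / 4 * ψ₂ r)
        = Complex.I * ψ₂ r) :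
    ∃ c₁ c₂ : ℂ, ¬ (c₁ = 0 ∧ c₂ = 0) ∧
      ∀ r ∈ Set.Ioi (0 : ℝ), c₁ * ψ₁ r + c₂ * ψ₂ r = 0 := by
  have h₁ := isSchrodingerSolution_landauPotential hm.ne' hsmooth₁ hode₁
  have h₂ := isSchrodingerSolution_landauPotential hm.ne' hsmooth₂ hode₂
  have hL2 {ψ : ℝ → ℂ} (hψ : MemLp ψ 2 (volume.restrict (Ioi 0))) :
      IntegrableOn (fun t => ‖ψ t‖ ^ 2) (Ioi 1) :=
    IntegrableOn.mono_set (hψ.integrable_norm_pow two_ne_zero) (Ioi_subset_Ioi zero_le_one)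
  have hQ : ∀ t ∈ Ioi (1 : ℝ), -(1 / 4) ≤ (landauPotential b m t).re :=
    fun t ht => neg_quarter_le_landauPotential_re b m (le_of_lt ht)
  have hW : ∀ r ∈ Ioi (0 : ℝ), wronskian ψ₁ ψ₂ r = 0 := fun r hr =>
    h₁.wronskian_eq_zero h₂ (hL2 hL2₁) (hL2 hL2₂)
      (h₁.integrableOn_norm_sq_deriv (by norm_num) hQ (hL2 hL2₁))
      (h₂.integrableOn_norm_sq_deriv (by norm_num) hQ (hL2 hL2₂)) hr
  by_cases hψ₁ : ∀ r ∈ Ioi (0 : ℝ), ψ₁ r = 0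
  · exact ⟨1, 0, by simp, fun r hr => by simp [hψ₁ r hr]⟩
  push Not at hψ₁
  obtain ⟨r₀, hr₀, hne⟩ := hψ₁
  refine ⟨ψ₂ r₀ / ψ₁ r₀, -1, by simp, fun r hr => ?_⟩
  rw [h₁.eq_div_mul_of_wronskian_eq_zero h₂ (continuousOn_landauPotential b m) hW hr₀ hne hr]
  ring

/-- For `b > 0`, `m > 0`, any two twice continuously differentiable, square-integrable
solutions on `(0,∞)` of the `l = 0` deficiency equation
`−(1/(2m))[ψ'' + (1/4)ψ/r² − (b²r²/4)ψ] = i ψ` are linearly dependent over `ℂ`. -/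
theorem deficiency_plus_solutions_l_zero_linearly_dependent
    (b m : ℝ) (hb : 0 < b) (hm : 0 < m)
    (ψ₁ ψ₂ : ℝ → ℂ)
    (hsmooth₁ : ContDiffOn ℝ 2 ψ₁ (Set.Ioi 0))
    (hsmooth₂ : ContDiffOn ℝ 2 ψ₂ (Set.Ioi 0))
    (hL2₁ : MemLp ψ₁ 2 (volume.restrict (Set.Ioi 0)))
    (hL2₂ : MemLp ψ₂ 2 (volume.restrict (Set.Ioi 0)))
    (hode₁ : ∀ r ∈ Set.Ioi (0 : ℝ),
      -(1 / (2 * (m : ℂ))) * (deriv (deriv ψ₁) r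
          + (1 : ℂ) / 4 * ψ₁ r / (r : ℂ) ^ 2
          - (b : ℂ) ^ 2 * (r : ℂ) ^ 2 / 4 * ψ₁ r)
        = Complex.I * ψ₁ r)
    (hode₂ : ∀ r ∈ Set.Ioi (0 : ℝ),
      -(1 / (2 * (m : ℂ))) * (deriv (deriv ψ₂) r
          + (1 : ℂ) / 4 * ψ₂ r / (r : ℂ) ^ 2
          - (b : ℂ) ^ 2 * (r : ℂ) ^ 2 / 4 * ψ₂ r)
        = Complex.I * ψ₂ r) :
    ∃ c₁ c₂ : ℂ, ¬ (c₁ = 0 ∧ c₂ = 0) ∧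
      ∀ r ∈ Set.Ioi (0 : ℝ), c₁ * ψ₁ r + c₂ * ψ₂ r = 0 :=
  deficiency_plus_solutions_l_zero_linearly_dependent_general b m hm ψ₁ ψ₂ hsmooth₁ hsmooth₂ hL2₁
    hL2₂ hode₁ hode₂
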